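/- The rejection sampling policy built on its own reward model is optimal among all rejection sampling policies with the same base policy and sample count: for any base policy π₀ over a finite response space, sample count n, reward r₀, and prompt distribution μ, V^μ_{r₀}(π_RS(π₀, r₀, n)) = max over rewards r of V^μ_{r₀}(π_RS(π₀, r, n)). -/

import Mathlib

/-- Index of a sample achieving the maximal value of `f`. -/
noncomputable def argmaxIdx {n : ℕ} (hn : 0 < n) (f : Fin n → ℝ) : Fin n :=
  Classical.choose
    (Finset.exists_max_image (Finset.univ : Finset (Fin n)) f ⟨⟨0, hn⟩, Finset.mem_univ _⟩)

/-- Expected reward (under `reval`) of the rejection-sampling policy with base policy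
`pol0`, selection reward `rsel`, `n` i.i.d. samples, averaged over the prompt
distribution `μ`:  `V^μ_{reval}(π_RS(pol0, rsel, n))`. -/
noncomputable def RSval {X A : Type*} [Fintype X] [Fintype A]
    (μ : X → ℝ) (pol0 : X → A → ℝ) (rsel reval : X → A → ℝ) {n : ℕ} (hn : 0 < n) : ℝ :=
  ∑ x, μ x * ∑ v : Fin n → A,
    (∏ i, pol0 x (v i)) * reval x (v (argmaxIdx hn fun i => rsel x (v i)))

/-!
Selecting by `r₀` itself picks, for every prompt and every sample vector, a sample of maximal
`r₀`-reward, hence one at least as good as whatever any other selection reward picks; the value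
is a nonnegative combination of these pointwise rewards.
-/

lemma le_argmaxIdx {n : ℕ} (hn : 0 < n) (f : Fin n → ℝ) (j : Fin n) :
    f j ≤ f (argmaxIdx hn f) :=
  (Classical.choose_spec (Finset.exists_max_image (Finset.univ : Finset (Fin n)) f
    ⟨⟨0, hn⟩, Finset.mem_univ _⟩)).2 j (Finset.mem_univ _)

lemma RSval_le_RSval_self {X A : Type*} [Fintype X] [Fintype A] {n : ℕ} (hn : 0 < n)
    {μ : X → ℝ} (hμ0 : ∀ x, 0 ≤ μ x) {pol0 : X → A → ℝ} (hp0 : ∀ x a, 0 ≤ pol0 x a)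
    (rsel reval : X → A → ℝ) :
    RSval μ pol0 rsel reval hn ≤ RSval μ pol0 reval reval hn := by
  unfold RSval
  gcongr with x _ v _
  · exact hμ0 x
  · exact Finset.prod_nonneg fun i _ => hp0 x (v i)
  · exact le_argmaxIdx hn (fun i => reval x (v i)) _

theorem rs_self_optimal_general {X A : Type*} [Fintype X] [Fintype A]
    {n : ℕ} (hn : 0 < n)
    (μ : X → ℝ) (hμ0 : ∀ x, 0 ≤ μ x)
    (pol0 : X → A → ℝ) (hp0 : ∀ x a, 0 ≤ pol0 x a)
    (r₀ : X → A → ℝ) :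
    IsGreatest (Set.range fun r : X → A → ℝ => RSval μ pol0 r r₀ hn)
      (RSval μ pol0 r₀ r₀ hn) := by
  refine ⟨⟨r₀, rfl⟩, ?_⟩
  rintro _ ⟨r, rfl⟩
  exact RSval_le_RSval_self hn hμ0 hp0 r r₀

/-- The rejection-sampling policy built on its own reward model is optimal
among all rejection-sampling policies with the same base policy and sample count:
`V^μ_{r₀}(π_RS(π₀, r₀, n))` is the greatest value of `r ↦ V^μ_{r₀}(π_RS(π₀, r, n))`. -/
theorem rs_self_optimal {X A : Type*} [Fintype X] [Fintype A]
    {n : ℕ} (hn : 0 < n)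
    (μ : X → ℝ) (hμ0 : ∀ x, 0 ≤ μ x) (hμ1 : ∑ x, μ x = 1)
    (pol0 : X → A → ℝ) (hp0 : ∀ x a, 0 ≤ pol0 x a) (hp1 : ∀ x, ∑ a, pol0 x a = 1)
    (r₀ : X → A → ℝ) :
    IsGreatest (Set.range fun r : X → A → ℝ => RSval μ pol0 r r₀ hn)
      (RSval μ pol0 r₀ r₀ hn) :=
  rs_self_optimal_general hn μ hμ0 pol0 hp0 r₀
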